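/- arXiv:1305.7009 — 2 statements merged into one kernel-verified Lean document; each statement's English description precedes it below -/
import Mathlib

section
/- Fix η ∈ (2/3, √3−1] and the trine directions n₁, n₂, n₃ in the ZX plane. For each pair (ij), let G^{ij} be the parametric joint-measurement family with α = α(η) = 1 − η²/2 and a = a(η) = (0, √(1 + η⁴/4 − 2η²), 0). Then for the state ρ = |ψ⟩⟨ψ| with ψ = (1/√2)(1, i)ᵀ, the average anticorrelation probability satisfies R₃(ρ) = 1/2 + η²/4 + (1/2)√(1 + η⁴/4 − 2η²) = (1 − η/3) + C(η)/6. -/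
open Matrix ComplexOrder

noncomputable section

abbrev Mat2 := Matrix (Fin 2) (Fin 2) ℂ

/-- Pauli matrix σ₁. -/
def σ1 : Mat2 := !![0, 1; 1, 0]
/-- Pauli matrix σ₂. -/
def σ2 : Mat2 := !![0, -Complex.I; Complex.I, 0]
/-- Pauli matrix σ₃. -/
def σ3 : Mat2 := !![1, 0; 0, -1]

/-- σ·a for a real 3-vector a. -/
def pauli (a : Fin 3 → ℝ) : Mat2 := (a 0 : ℂ) • σ1 + (a 1 : ℂ) • σ2 + (a 2 : ℂ) • σ3

/-- Euclidean inner product on ℝ³. -/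
def dot3 (a b : Fin 3 → ℝ) : ℝ := a 0 * b 0 + a 1 * b 1 + a 2 * b 2

/-- Euclidean norm on ℝ³. -/
def norm3 (a : Fin 3 → ℝ) : ℝ := Real.sqrt (dot3 a a)

/-- A qubit effect: both `E` and `I - E` positive semidefinite. -/
def IsEffect (E : Mat2) : Prop := E.PosSemidef ∧ (1 - E).PosSemidef

/-- A qubit density matrix. -/
def IsDensity (ρ : Mat2) : Prop := ρ.PosSemidef ∧ ρ.trace = 1

/-- E₊ = (1/2)(I + η σ·n). -/
def Epos (η : ℝ) (n : Fin 3 → ℝ) : Mat2 := (1/2 : ℂ) • (1 + (η : ℂ) • pauli n)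
/-- E₋ = (1/2)(I - η σ·n). -/
def Eneg (η : ℝ) (n : Fin 3 → ℝ) : Mat2 := (1/2 : ℂ) • (1 - (η : ℂ) • pauli n)

/-- A pairwise joint measurement of the noisy spin-1/2 observables along nᵢ and nⱼ. -/
def IsJointMmt (η : ℝ) (ni nj : Fin 3 → ℝ) (Gpp Gpm Gmp Gmm : Mat2) : Prop :=
  IsEffect Gpp ∧ IsEffect Gpm ∧ IsEffect Gmp ∧ IsEffect Gmm ∧
  Gpp + Gpm = Epos η ni ∧ Gmp + Gmm = Eneg η ni ∧
  Gpp + Gmp = Epos η nj ∧ Gpm + Gmm = Eneg η nj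

/-- Average anticorrelation probability R₃(ρ), given the anticorrelation effects of the
three pairwise joint measurements. -/
def R3 (ρ G12pm G12mp G13pm G13mp G23pm G23mp : Mat2) : ℝ :=
  (1/3) * ((ρ * (G12pm + G12mp)).trace.re + (ρ * (G13pm + G13mp)).trace.re +
    (ρ * (G23pm + G23mp)).trace.re)

/-- Parametric joint-measurement family. -/
def Gpp (η : ℝ) (ni nj : Fin 3 → ℝ) (α : ℝ) (a : Fin 3 → ℝ) : Mat2 :=
  (1/2 : ℂ) • (((α/2 : ℝ) : ℂ) • (1 : Mat2) + pauli ((1/2 : ℝ) • (η • (ni + nj) - a)))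
def Gpm (η : ℝ) (ni nj : Fin 3 → ℝ) (α : ℝ) (a : Fin 3 → ℝ) : Mat2 :=
  (1/2 : ℂ) • (((1 - α/2 : ℝ) : ℂ) • (1 : Mat2) + pauli ((1/2 : ℝ) • (η • (ni - nj) + a)))
def Gmp (η : ℝ) (ni nj : Fin 3 → ℝ) (α : ℝ) (a : Fin 3 → ℝ) : Mat2 :=
  (1/2 : ℂ) • (((1 - α/2 : ℝ) : ℂ) • (1 : Mat2) + pauli ((1/2 : ℝ) • (-(η • ni) + η • nj + a)))
def Gmm (η : ℝ) (ni nj : Fin 3 → ℝ) (α : ℝ) (a : Fin 3 → ℝ) : Mat2 :=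
  (1/2 : ℂ) • (((α/2 : ℝ) : ℂ) • (1 : Mat2) + pauli ((1/2 : ℝ) • (-(η • (ni + nj)) - a)))

/-- Trine directions in the ZX plane. -/
def tn1 : Fin 3 → ℝ := ![0, 0, 1]
def tn2 : Fin 3 → ℝ := ![Real.sqrt 3 / 2, 0, -(1/2)]
def tn3 : Fin 3 → ℝ := ![-(Real.sqrt 3 / 2), 0, -(1/2)]

/-- sign of a Boolean, as ±1. -/
def sgn (b : Bool) : ℝ := if b then 1 else -1

/-- m_X = Σₖ Xₖ nₖ. -/
def mvec {N : ℕ} (n : Fin N → Fin 3 → ℝ) (X : Fin N → Bool) : Fin 3 → ℝ :=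
  ∑ k, sgn (X k) • n k

/-- Joint measurability of the N noisy qubit observables. -/
def JointlyMeasurable {N : ℕ} (η : ℝ) (n : Fin N → Fin 3 → ℝ) : Prop :=
  ∃ E : (Fin N → Bool) → Mat2,
    (∀ X, IsEffect (E X)) ∧ (∑ X, E X) = 1 ∧
    (∀ k, ∑ X ∈ Finset.univ.filter (fun X => X k = true), E X = Epos η (n k)) ∧
    (∀ k, ∑ X ∈ Finset.univ.filter (fun X => X k = false), E X = Eneg η (n k))


/-- a(η) = (0, √(1 + η⁴/4 - 2η²), 0). -/
def aopt (η : ℝ) : Fin 3 → ℝ := ![0, Real.sqrt (1 + η^4/4 - 2*η^2), 0]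

/-- α(η) = 1 - η²/2. -/
def αopt (η : ℝ) : ℝ := 1 - η^2/2

/-- C(η) = 2η + 3(√(1 + η⁴/4 - 2η²) - (1 - η²/2)). -/
def Cfun (η : ℝ) : ℝ := 2*η + 3*(Real.sqrt (1 + η^4/4 - 2*η^2) - (1 - η^2/2))

/-- The state ρ = |ψ⟩⟨ψ| with ψ = (1/√2)(1, i)ᵀ. -/
def ρopt : Mat2 := !![1/2, -Complex.I/2; Complex.I/2, 1/2]

/-! The anticorrelation effect `G₊₋ + G₋₊ = (1/2)((2 - α) I + σ·a)` of the parametric family does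
not depend on the pair of directions, so all three pairs contribute the same probability. For a
state with Bloch vector `r`, i.e. `ρ = (1/2)(I + σ·r)`, that probability is `(2 - α + r·a)/2`, by
`Tr (σ·a) = 0` and `Tr ((σ·r)(σ·a)) = 2 r·a`. The given state has `r = (0, 1, 0)`, so `r·a(η)` is
the square root in the claim. -/

lemma pauli_add (x y : Fin 3 → ℝ) : pauli (x + y) = pauli x + pauli y := by
  simp only [pauli, Pi.add_apply, Complex.ofReal_add, add_smul]
  abel

lemma trace_pauli (a : Fin 3 → ℝ) : (pauli a).trace = 0 := by
  simp [pauli, σ1, σ2, σ3, Matrix.trace_fin_two]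

lemma trace_pauli_mul_pauli (r a : Fin 3 → ℝ) :
    (pauli r * pauli a).trace = 2 * (dot3 r a : ℂ) := by
  simp only [pauli, σ1, σ2, σ3, dot3, Matrix.trace_fin_two, Matrix.mul_apply, Fin.sum_univ_two,
    Matrix.add_apply, Matrix.smul_apply, Matrix.of_apply, Matrix.cons_val', Matrix.cons_val_zero,
    Matrix.cons_val_one, Matrix.empty_val', Matrix.cons_val_fin_one, smul_eq_mul]
  push_cast
  linear_combination (-2 * r 1 * a 1 : ℂ) * Complex.I_sq

def blochState (r : Fin 3 → ℝ) : Mat2 := (1/2 : ℂ) • (1 + pauli r)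

lemma ρopt_eq_blochState : ρopt = blochState ![0, 1, 0] := by
  ext i j
  fin_cases i <;> fin_cases j <;> simp [ρopt, blochState, pauli, σ1, σ2, σ3, div_eq_inv_mul]

lemma re_trace_blochState_mul (r a : Fin 3 → ℝ) (c : ℝ) :
    (blochState r * ((1/2 : ℂ) • ((c : ℂ) • (1 : Mat2) + pauli a))).trace.re
      = (c + dot3 r a) / 2 := by
  have htr : (blochState r * ((1/2 : ℂ) • ((c : ℂ) • (1 : Mat2) + pauli a))).trace
      = ((c + dot3 r a) / 2 : ℝ) := by
    simp only [blochState, Matrix.smul_mul, Matrix.mul_smul, Matrix.add_mul, Matrix.mul_add,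
      Matrix.one_mul, Matrix.mul_one, Matrix.trace_smul, Matrix.trace_add, Matrix.trace_one,
      trace_pauli, trace_pauli_mul_pauli, smul_eq_mul, Fintype.card_fin]
    push_cast
    ring
  rw [htr, Complex.ofReal_re]

lemma Gpm_add_Gmp (η α : ℝ) (ni nj a : Fin 3 → ℝ) :
    Gpm η ni nj α a + Gmp η ni nj α a
      = (1/2 : ℂ) • (((2 - α : ℝ) : ℂ) • (1 : Mat2) + pauli a) := by
  have hv : (1/2 : ℝ) • (η • (ni - nj) + a) + (1/2 : ℝ) • (-(η • ni) + η • nj + a) = a := by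
    funext k
    simp only [Pi.add_apply, Pi.smul_apply, Pi.sub_apply, Pi.neg_apply, smul_eq_mul]
    ring
  unfold Gpm Gmp
  rw [← smul_add, add_add_add_comm, ← pauli_add, hv, ← add_smul]
  congr 3
  push_cast
  ring

lemma R3_blochState_parametric (r : Fin 3 → ℝ) (η α : ℝ) (n₁ n₂ n₃ a : Fin 3 → ℝ) :
    R3 (blochState r)
      (Gpm η n₁ n₂ α a) (Gmp η n₁ n₂ α a)
      (Gpm η n₁ n₃ α a) (Gmp η n₁ n₃ α a)
      (Gpm η n₂ n₃ α a) (Gmp η n₂ n₃ α a)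
      = (2 - α + dot3 r a) / 2 := by
  simp only [R3, Gpm_add_Gmp, re_trace_blochState_mul]
  ring

lemma dot3_aopt (η : ℝ) : dot3 ![0, 1, 0] (aopt η) = Real.sqrt (1 + η^4/4 - 2*η^2) := by
  simp [dot3, aopt]

theorem R3_value_trine_general (η : ℝ) :
    R3 ρopt
      (Gpm η tn1 tn2 (αopt η) (aopt η)) (Gmp η tn1 tn2 (αopt η) (aopt η))
      (Gpm η tn1 tn3 (αopt η) (aopt η)) (Gmp η tn1 tn3 (αopt η) (aopt η))
      (Gpm η tn2 tn3 (αopt η) (aopt η)) (Gmp η tn2 tn3 (αopt η) (aopt η))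
      = 1/2 + η^2/4 + (1/2) * Real.sqrt (1 + η^4/4 - 2*η^2) ∧
    1/2 + η^2/4 + (1/2) * Real.sqrt (1 + η^4/4 - 2*η^2) = (1 - η/3) + Cfun η / 6 := by
  constructor
  · rw [ρopt_eq_blochState, R3_blochState_parametric, dot3_aopt, αopt]
    ring
  · rw [Cfun]
    ring

/-- For trine axes in the ZX plane, sharpness η ∈ (2/3, √3 - 1], the parametric joint
measurements with α(η), a(η), and the state ψ = (1/√2)(1, i)ᵀ, the average anticorrelation
is R₃ = 1/2 + η²/4 + (1/2)√(1 + η⁴/4 - 2η²) = (1 - η/3) + C(η)/6. -/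
theorem R3_value_trine (η : ℝ) (hη : η ∈ Set.Ioc (2/3 : ℝ) (Real.sqrt 3 - 1)) :
    R3 ρopt
      (Gpm η tn1 tn2 (αopt η) (aopt η)) (Gmp η tn1 tn2 (αopt η) (aopt η))
      (Gpm η tn1 tn3 (αopt η) (aopt η)) (Gmp η tn1 tn3 (αopt η) (aopt η))
      (Gpm η tn2 tn3 (αopt η) (aopt η)) (Gmp η tn2 tn3 (αopt η) (aopt η))
      = 1/2 + η^2/4 + (1/2) * Real.sqrt (1 + η^4/4 - 2*η^2) ∧
    1/2 + η^2/4 + (1/2) * Real.sqrt (1 + η^4/4 - 2*η^2) = (1 - η/3) + Cfun η / 6 :=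
  R3_value_trine_general η

end
end

section
/- Let n_i, n_j be unit vectors in ℝ³ and η ∈ [0,1], with effects E^k_± = (1/2)(I ± η σ·n_k) for k ∈ {i,j}. If four qubit effects (G_{++}, G_{+-}, G_{-+}, G_{--}) form a pairwise joint measurement for the pair (i,j) (i.e., satisfy the four marginal conditions), then there exist α ∈ ℝ and a ∈ ℝ³ such that G_{++} = (1/2)[(α/2)I + σ·((η(n_i+n_j) − a)/2)], G_{+-} = (1/2)[(1−α/2)I + σ·((η(n_i−n_j) + a)/2)], G_{-+} = (1/2)[(1−α/2)I + σ·((−η n_i + η n_j + a)/2)], and G_{--} = (1/2)[(α/2)I + σ·((−η(n_i+n_j) − a)/2)]. -/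
open Matrix ComplexOrder

noncomputable section

/-! A Hermitian 2×2 matrix is (1/2)(c I + σ·v) with c ∈ ℝ and v ∈ ℝ³, so G₊₊ alone is of the
parametric form for suitable α and a. The marginal conditions then force G₊₋ = E^i_+ − G₊₊,
G₋₊ = E^j_+ − G₊₊ and G₋₋ = E^j_− − G₊₋, and linearity of σ· turns these differences into the
stated expressions. -/

section Pauli

variable (a b : Fin 3 → ℝ) (r : ℝ)

lemma pauli_add_s11 : pauli (a + b) = pauli a + pauli b := by
  simp only [pauli, Pi.add_apply, Complex.ofReal_add, add_smul]
  abel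

lemma pauli_smul : pauli (r • a) = (r : ℂ) • pauli a := by
  simp only [pauli, Pi.smul_apply, smul_eq_mul, Complex.ofReal_mul, mul_smul, smul_add]

lemma pauli_neg : pauli (-a) = -pauli a := by
  simpa using pauli_smul a (-1)

lemma pauli_sub : pauli (a - b) = pauli a - pauli b := by
  rw [sub_eq_add_neg, pauli_add_s11, pauli_neg, sub_eq_add_neg]

end Pauli

lemma Matrix.IsHermitian.exists_eq_half_smul_one_add_pauli {M : Mat2} (hM : M.IsHermitian) :
    ∃ (c : ℝ) (v : Fin 3 → ℝ), M = (1/2 : ℂ) • ((c : ℂ) • (1 : Mat2) + pauli v) := by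
  refine ⟨(M 0 0).re + (M 1 1).re,
    ![2 * (M 0 1).re, -2 * (M 0 1).im, (M 0 0).re - (M 1 1).re], ?_⟩
  have h00 : (M 0 0).im = 0 := Complex.conj_eq_iff_im.mp (hM.apply 0 0)
  have h11 : (M 1 1).im = 0 := Complex.conj_eq_iff_im.mp (hM.apply 1 1)
  have h10 : M 1 0 = star (M 0 1) := (hM.apply 1 0).symm
  ext i j
  fin_cases i <;> fin_cases j <;> apply Complex.ext <;>
    simp [pauli, σ1, σ2, σ3, h00, h11, h10] <;> ring

section ParametricFamily

variable (η : ℝ) (ni nj : Fin 3 → ℝ) (α : ℝ) (a : Fin 3 → ℝ)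

lemma Matrix.IsHermitian.exists_eq_Gpp {M : Mat2} (hM : M.IsHermitian) :
    ∃ (α : ℝ) (a : Fin 3 → ℝ), M = Gpp η ni nj α a := by
  obtain ⟨c, v, rfl⟩ := hM.exists_eq_half_smul_one_add_pauli
  refine ⟨2 * c, η • (ni + nj) - (2 : ℝ) • v, ?_⟩
  unfold Gpp
  congr 4
  · ring
  · module

lemma Epos_sub_Gpp_eq_Gpm : Epos η ni - Gpp η ni nj α a = Gpm η ni nj α a := by
  simp only [Epos, Gpp, Gpm, pauli_add_s11, pauli_sub, pauli_smul]
  push_cast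
  module

lemma Epos_sub_Gpp_eq_Gmp : Epos η nj - Gpp η ni nj α a = Gmp η ni nj α a := by
  simp only [Epos, Gpp, Gmp, pauli_add_s11, pauli_sub, pauli_smul, pauli_neg]
  push_cast
  module

lemma Eneg_sub_Gpm_eq_Gmm : Eneg η nj - Gpm η ni nj α a = Gmm η ni nj α a := by
  simp only [Eneg, Gpm, Gmm, pauli_add_s11, pauli_sub, pauli_smul, pauli_neg]
  push_cast
  module

end ParametricFamily

theorem joint_measurement_parametric_form_general
    (ni nj : Fin 3 → ℝ)
    (η : ℝ)
    (Jpp Jpm Jmp Jmm : Mat2)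
    (h : IsJointMmt η ni nj Jpp Jpm Jmp Jmm) :
    ∃ (α : ℝ) (a : Fin 3 → ℝ),
      Jpp = Gpp η ni nj α a ∧ Jpm = Gpm η ni nj α a ∧
      Jmp = Gmp η ni nj α a ∧ Jmm = Gmm η ni nj α a := by
  obtain ⟨hpp, -, -, -, hi_pos, -, hj_pos, hj_neg⟩ := h
  obtain ⟨α, a, rfl⟩ := hpp.1.isHermitian.exists_eq_Gpp η ni nj
  have hpm : Jpm = Gpm η ni nj α a := by
    rw [← Epos_sub_Gpp_eq_Gpm, ← hi_pos, add_sub_cancel_left]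
  have hmp : Jmp = Gmp η ni nj α a := by
    rw [← Epos_sub_Gpp_eq_Gmp, ← hj_pos, add_sub_cancel_left]
  refine ⟨α, a, rfl, hpm, hmp, ?_⟩
  rw [← Eneg_sub_Gpm_eq_Gmm, ← hj_neg, hpm, add_sub_cancel_left]

/-- Every pairwise joint measurement of two noisy spin-1/2 observables is of the
parametric form, for some α ∈ ℝ and a ∈ ℝ³. -/
theorem joint_measurement_parametric_form
    (ni nj : Fin 3 → ℝ) (hi : norm3 ni = 1) (hj : norm3 nj = 1)
    (η : ℝ) (hη : η ∈ Set.Icc (0 : ℝ) 1)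
    (Jpp Jpm Jmp Jmm : Mat2)
    (h : IsJointMmt η ni nj Jpp Jpm Jmp Jmm) :
    ∃ (α : ℝ) (a : Fin 3 → ℝ),
      Jpp = Gpp η ni nj α a ∧ Jpm = Gpm η ni nj α a ∧
      Jmp = Gmp η ni nj α a ∧ Jmm = Gmm η ni nj α a :=
  joint_measurement_parametric_form_general ni nj η Jpp Jpm Jmp Jmm h

end
end
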